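/- A branch group G ≤ Aut(X*) is just-infinite (every nontrivial normal subgroup of G has finite index) if and only if for every word u ∈ X* the rigid stabilizer Rist_G(u) has finite abelianization, i.e., the commutator subgroup [Rist_G(u), Rist_G(u)] has finite index in Rist_G(u). -/

import Mathlib

/-!  Common setup: the group `Aut(X*)` of automorphisms of the rooted binary tree,
the Grigorchuk generators `a, b_ω, c_ω, d_ω`, and the subgroups `G_ω`, `L_ω`. -/

/-- Finite words over `X = {0,1}`: vertices of the rooted binary tree. -/
abbrev Word := List Bool

/-- `Aut(X*)`: bijections of the set of words which preserve word length
(hence fix the empty word) and preserve the prefix relation, as a subgroup of the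
permutation group of `Word`. -/
def TreeAut : Subgroup (Equiv.Perm Word) where
  carrier := {g | (∀ w : Word, (g w).length = w.length) ∧
      ∀ u v : Word, u <+: v ↔ g u <+: g v}
  one_mem' := ⟨fun _ => rfl, fun _ _ => Iff.rfl⟩
  mul_mem' := by
    rintro g h ⟨hg1, hg2⟩ ⟨hh1, hh2⟩
    refine ⟨fun w => ?_, fun u v => ?_⟩
    · simpa using (hg1 (h w)).trans (hh1 w)
    · simpa using (hh2 u v).trans (hg2 (h u) (h v))
  inv_mem' := by
    rintro g ⟨hg1, hg2⟩
    refine ⟨fun w => ?_, fun u v => ?_⟩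
    · have := hg1 (g⁻¹ w)
      rw [Equiv.Perm.coe_inv, Equiv.apply_symm_apply] at this
      exact this.symm
    · have := (hg2 (g⁻¹ u) (g⁻¹ v)).symm
      simpa using this

/-- Application of a tree automorphism to a word. -/
def ap (g : ↥TreeAut) (w : Word) : Word := (g : Equiv.Perm Word) w

/-- The root permutation `a` (as a map): `a(0v) = 1v`, `a(1v) = 0v`. -/
def aFun : Word → Word
  | [] => []
  | x :: v => (!x) :: v

/-- The common recursive pattern of the maps `b_ω, c_ω, d_ω`: on `0v` act by the
identity if `ω 0 = k` and by `a` otherwise, on `1v` recurse with the shifted sequence.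
(`k = 2` gives `b`, `k = 1` gives `c`, `k = 0` gives `d`.) -/
def genFun (k : Fin 3) : (ℕ → Fin 3) → Word → Word
  | _, [] => []
  | ω, false :: v => false :: (if ω 0 = k then v else aFun v)
  | ω, true :: v => true :: genFun k (fun n => ω (n + 1)) v

lemma aFun_invol : Function.Involutive aFun := by
  intro w; cases w with
  | nil => rfl
  | cons x v => simp [aFun]

lemma aFun_length : ∀ w : Word, (aFun w).length = w.length := by
  intro w; cases w <;> simp [aFun]

lemma aFun_prefix : ∀ u v : Word, u <+: v → aFun u <+: aFun v := by
  intro u v h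
  cases u with
  | nil => simp [aFun]
  | cons x u' =>
    cases v with
    | nil => simp at h
    | cons y v' =>
      rw [List.cons_prefix_cons] at h
      obtain ⟨rfl, h2⟩ := h
      simpa [aFun, List.cons_prefix_cons] using h2

lemma genFun_length (k : Fin 3) : ∀ (w : Word) (ω : ℕ → Fin 3),
    (genFun k ω w).length = w.length
  | [], _ => rfl
  | false :: v, ω => by
    by_cases h : ω 0 = k <;> simp [genFun, h, aFun_length]
  | true :: v, ω => by
    simp [genFun, genFun_length k v]

lemma genFun_invol (k : Fin 3) : ∀ (w : Word) (ω : ℕ → Fin 3),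
    genFun k ω (genFun k ω w) = w
  | [], _ => rfl
  | false :: v, ω => by
    by_cases h : ω 0 = k <;> simp [genFun, h, aFun_invol v]
  | true :: v, ω => by
    simp [genFun, genFun_invol k v]

lemma genFun_prefix (k : Fin 3) : ∀ (u v : Word) (ω : ℕ → Fin 3),
    u <+: v → genFun k ω u <+: genFun k ω v
  | [], v, ω, _ => by simp [genFun]
  | x :: u', [], ω, h => by simp at h
  | x :: u', y :: v', ω, h => by
    rw [List.cons_prefix_cons] at h
    obtain ⟨rfl, h2⟩ := h
    cases x with
    | false =>
      by_cases h0 : ω 0 = k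
      · simpa [genFun, h0, List.cons_prefix_cons] using h2
      · simpa [genFun, h0, List.cons_prefix_cons] using aFun_prefix u' v' h2
    | true =>
      simpa [genFun, List.cons_prefix_cons] using genFun_prefix k u' v' _ h2

/-- Build an element of `Aut(X*)` from an involutive, length-preserving,
prefix-preserving map. -/
def mkAut (f : Word → Word) (hinv : Function.Involutive f)
    (hlen : ∀ w, (f w).length = w.length)
    (hpre : ∀ u v : Word, u <+: v → f u <+: f v) : ↥TreeAut :=
  ⟨hinv.toPerm, by
    refine ⟨fun w => ?_, fun u v => ⟨fun h => ?_, fun h => ?_⟩⟩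
    · simpa using hlen w
    · simpa using hpre u v h
    · have := hpre _ _ (by simpa using h)
      simpa [hinv u, hinv v] using this⟩

/-- The automorphism `a`. -/
def aAut : ↥TreeAut := mkAut aFun aFun_invol aFun_length aFun_prefix

/-- The automorphism `b_ω`. -/
def bAut (ω : ℕ → Fin 3) : ↥TreeAut :=
  mkAut (genFun 2 ω) (fun w => genFun_invol 2 w ω) (fun w => genFun_length 2 w ω)
    (fun u v h => genFun_prefix 2 u v ω h)

/-- The automorphism `c_ω`. -/
def cAut (ω : ℕ → Fin 3) : ↥TreeAut :=
  mkAut (genFun 1 ω) (fun w => genFun_invol 1 w ω) (fun w => genFun_length 1 w ω)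
    (fun u v h => genFun_prefix 1 u v ω h)

/-- The automorphism `d_ω`. -/
def dAut (ω : ℕ → Fin 3) : ↥TreeAut :=
  mkAut (genFun 0 ω) (fun w => genFun_invol 0 w ω) (fun w => genFun_length 0 w ω)
    (fun u v h => genFun_prefix 0 u v ω h)

/-- `G_ω = ⟨a, b_ω, c_ω, d_ω⟩`. -/
def Ggrp (ω : ℕ → Fin 3) : Subgroup ↥TreeAut :=
  Subgroup.closure {aAut, bAut ω, cAut ω, dAut ω}

/-- `L_ω = ⟨a b_ω, d_ω⟩`. -/
def Lgrp (ω : ℕ → Fin 3) : Subgroup ↥TreeAut :=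
  Subgroup.closure {aAut * bAut ω, dAut ω}

/-- The `n`-fold shift `σⁿω`. -/
def shift (n : ℕ) (ω : ℕ → Fin 3) : ℕ → Fin 3 := fun m => ω (m + n)

/-- `Ω_∞`: sequences in which each of `0, 1, 2` occurs infinitely often. -/
def OmegaInf : Set (ℕ → Fin 3) := {ω | ∀ k : Fin 3, ∀ N : ℕ, ∃ n, N ≤ n ∧ ω n = k}

/-- `g` fixes every word of length `n`. -/
def fixesLevel (g : ↥TreeAut) (n : ℕ) : Prop := ∀ w : Word, w.length = n → ap g w = w

/-- The subgroup of all tree automorphisms acting trivially outside the subtree `uX*`. -/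
def ristSubgroup (u : Word) : Subgroup ↥TreeAut where
  carrier := {g | ∀ w : Word, ¬ u <+: w → ap g w = w}
  one_mem' := by intro w _; rfl
  mul_mem' := by
    intro g h hg hh w hw
    have e1 : ap g w = w := hg w hw
    have e2 : ap h w = w := hh w hw
    simp only [ap] at e1 e2
    show (g : Equiv.Perm Word) ((h : Equiv.Perm Word) w) = w
    rw [e2, e1]
  inv_mem' := by
    intro g hg w hw
    have h1' : ap g w = w := hg w hw
    have h1 : (g : Equiv.Perm Word) w = w := h1'
    show ((g : Equiv.Perm Word))⁻¹ w = w
    conv_lhs => rw [← h1]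
    simp

/-- The subgroup of all tree automorphisms fixing every word of length `n`
(the `n`-th level stabilizer in `Aut(X*)`). -/
def levelStab (n : ℕ) : Subgroup ↥TreeAut where
  carrier := {g | fixesLevel g n}
  one_mem' := by intro w _; rfl
  mul_mem' := by
    intro g h hg hh w hw
    have e1 : ap g w = w := hg w hw
    have e2 : ap h w = w := hh w hw
    simp only [ap] at e1 e2
    show (g : Equiv.Perm Word) ((h : Equiv.Perm Word) w) = w
    rw [e2, e1]
  inv_mem' := by
    intro g hg w hw
    have h1' : ap g w = w := hg w hw
    have h1 : (g : Equiv.Perm Word) w = w := h1'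
    show ((g : Equiv.Perm Word))⁻¹ w = w
    conv_lhs => rw [← h1]
    simp

/-- The rigid level stabilizer `Rist_G(n)`: the subgroup generated by the rigid vertex
stabilizers `Rist_G(u) = G ⊓ ristSubgroup u` over all words `u` of length `n`. -/
def ristLevel (G : Subgroup ↥TreeAut) (n : ℕ) : Subgroup ↥TreeAut :=
  ⨆ u ∈ {u : Word | u.length = n}, G ⊓ ristSubgroup u

/-- `G` acts transitively on each level of the tree. -/
def LevelTransitive (G : Subgroup ↥TreeAut) : Prop :=
  ∀ u v : Word, u.length = v.length → ∃ g ∈ G, ap g u = v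

/-- A set of tree automorphisms acts level transitively on the subtree `vX*`. -/
def LevelTransitiveOn (S : Set ↥TreeAut) (v : Word) : Prop :=
  ∀ u₁ u₂ : Word, u₁.length = u₂.length → ∃ g ∈ S, ap g (v ++ u₁) = v ++ u₂

/-- `L_{n,ω}`: `L_{0,ω} = L_ω` and `L_{n,ω}` is generated by the squares of
elements of `L_{n-1,ω}`. -/
def Lsq (ω : ℕ → Fin 3) : ℕ → Subgroup ↥TreeAut
  | 0 => Lgrp ω
  | n + 1 => Subgroup.closure {x | ∃ y ∈ Lsq ω n, x = y * y}

/-- `g` is active at the word `v`: the section `g_v` acts nontrivially on the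
one-letter words. -/
def IsActive (g : ↥TreeAut) (v : Word) : Prop :=
  ap g (v ++ [false]) ≠ ap g v ++ [false]

open scoped Classical in
/-- `p(g)_n`: the number of words of length `n` at which `g` is active, mod 2
(words of length `n` are enumerated as `List.ofFn f` for `f : Fin n → Bool`). -/
noncomputable def pMap (g : ↥TreeAut) (n : ℕ) : ZMod 2 :=
  (((Finset.univ : Finset (Fin n → Bool)).filter
    (fun f => IsActive g (List.ofFn f))).card : ZMod 2)


/-! Write `Rist_G(n)'` for the subgroup generated by the commutator subgroups `Rist_G(u)'`,
`|u| = n`. Rigid stabilizers of distinct vertices of one level commute and have disjoint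
supports, so `Rist_G(n)' ⊓ Rist_G(u) = Rist_G(u)'`, and `Rist_G(n)'` has finite index in
`Rist_G(n)` as soon as every `Rist_G(u)'` has finite index in `Rist_G(u)`.

If `G` is just-infinite, the normal subgroup `Rist_G(n)'` is nontrivial, because `Rist_G(u)` is
not abelian: an element moving a vertex `s` below `u` cannot commute with a nontrivial element of
`Rist_G(s)`. So `Rist_G(n)'` has finite index in `G`, and `Rist_G(u)'` in `Rist_G(u)`.

Conversely, if a normal subgroup `N` contains some `g` with `g u ≠ u`, then for `h, k ∈ Rist_G(u)`
the element `g h g⁻¹` is supported below `g u`, hence `N ∋ ⁅⁅g, h⁆, k⁆ = ⁅h⁻¹, k⁆`. By level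
transitivity `N` contains `Rist_G(n)'` for `n = |u|`, which has finite index in `G`. -/

open Subgroup
open scoped commutatorElement

lemma List.not_prefix_of_length_eq {α : Type*} {u v : List α} (h : u.length = v.length)
    (hne : u ≠ v) : ¬ u <+: v :=
  fun hp => hne (hp.eq_of_length h)

section TreeAction

variable (g h : ↥TreeAut) (u v w : Word)

lemma ap_mul : ap (g * h) w = ap g (ap h w) := rfl

lemma ap_length : (ap g w).length = w.length := g.2.1 w

lemma prefix_iff_ap_prefix : u <+: v ↔ ap g u <+: ap g v := g.2.2 u v

lemma ap_injective : Function.Injective (ap g) := (g : Equiv.Perm Word).injective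

@[simp] lemma ap_inv_ap : ap g⁻¹ (ap g w) = w := by simp [ap]

@[simp] lemma ap_ap_inv : ap g (ap g⁻¹ w) = w := by simp [ap]

variable {g h}

lemma TreeAut.ext_ap (H : ∀ w, ap g w = ap h w) : g = h :=
  Subtype.ext (Equiv.ext H)

lemma exists_ap_ne_of_ne_one (hg : g ≠ 1) : ∃ w, ap g w ≠ w := by
  by_contra! h
  exact hg (TreeAut.ext_ap h)

end TreeAction

def subtreeFixer (u : Word) : Subgroup ↥TreeAut := fixingSubgroup ↥TreeAut {w | u <+: w}

section Subtrees

variable {g x y : ↥TreeAut} {u v w : Word}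

lemma mem_subtreeFixer : g ∈ subtreeFixer u ↔ ∀ w, u <+: w → ap g w = w :=
  mem_fixingSubgroup_iff ↥TreeAut

lemma ap_eq_self_of_mem_ristSubgroup (hg : g ∈ ristSubgroup u) : ap g u = u := by
  by_contra hne
  have hfix : ap g⁻¹ (ap g u) = ap g u :=
    inv_mem hg _ (List.not_prefix_of_length_eq (ap_length g u).symm (Ne.symm hne))
  exact hne (by rwa [ap_inv_ap, eq_comm] at hfix)

lemma prefix_ap_of_mem_ristSubgroup (hg : g ∈ ristSubgroup u) (h : u <+: w) : u <+: ap g w := by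
  simpa [ap_eq_self_of_mem_ristSubgroup hg] using (prefix_iff_ap_prefix g u w).mp h

lemma ristSubgroup_anti (h : u <+: v) : ristSubgroup v ≤ ristSubgroup u :=
  fun _ hg w hw => hg w fun hv => hw (h.trans hv)

lemma ristSubgroup_le_subtreeFixer (huv : ¬ u <+: v) (hvu : ¬ v <+: u) :
    ristSubgroup v ≤ subtreeFixer u :=
  fun _ hg => mem_subtreeFixer.mpr fun w hw =>
    hg w fun h => (List.prefix_or_prefix_of_prefix hw h).elim huv hvu

lemma disjoint_ristSubgroup_subtreeFixer : Disjoint (ristSubgroup u) (subtreeFixer u) :=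
  disjoint_def.mpr fun {g} hg hg' => TreeAut.ext_ap fun w => by
    by_cases hw : u <+: w
    · exact mem_subtreeFixer.mp hg' w hw
    · exact hg w hw

lemma commute_of_mem_ristSubgroup_of_mem_subtreeFixer (hx : x ∈ ristSubgroup u)
    (hy : y ∈ subtreeFixer u) : Commute x y := by
  refine TreeAut.ext_ap fun w => ?_
  rw [ap_mul, ap_mul]
  by_cases hw : u <+: w
  · rw [mem_subtreeFixer.mp hy w hw,
      mem_subtreeFixer.mp hy _ (prefix_ap_of_mem_ristSubgroup hx hw)]
  · have hyw : ¬ u <+: ap y w := fun h => by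
      have hfix : w = ap y w := by simpa using mem_subtreeFixer.mp (inv_mem hy) _ h
      exact hw (hfix ▸ h)
    rw [hx w hw, hx _ hyw]

lemma commute_of_mem_ristSubgroup (hx : x ∈ ristSubgroup u) (hy : y ∈ ristSubgroup v)
    (huv : ¬ u <+: v) (hvu : ¬ v <+: u) : Commute x y :=
  commute_of_mem_ristSubgroup_of_mem_subtreeFixer hx (ristSubgroup_le_subtreeFixer huv hvu hy)

lemma conj_mem_ristSubgroup (hy : y ∈ ristSubgroup u) : x * y * x⁻¹ ∈ ristSubgroup (ap x u) := by
  intro w hw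
  have hw' : ¬ u <+: ap x⁻¹ w := fun h => hw (by
    simpa using (prefix_iff_ap_prefix x u _).mp h)
  rw [ap_mul, ap_mul, hy _ hw', ap_ap_inv]

end Subtrees

def levelSup (H : Word → Subgroup ↥TreeAut) (n : ℕ) : Subgroup ↥TreeAut :=
  ⨆ u ∈ {u : Word | u.length = n}, H u

section LevelProduct

variable {H K : Word → Subgroup ↥TreeAut} {n : ℕ}

lemma le_levelSup {u : Word} (hu : u.length = n) : H u ≤ levelSup H n :=
  le_iSup₂ (f := fun u (_ : u ∈ {u : Word | u.length = n}) => H u) u hu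

lemma levelSup_eq_iSup : levelSup H n = ⨆ v : List.Vector Bool n, H v.toList :=
  (iSup_subtype (f := fun v : List.Vector Bool n => H v.toList)).symm

variable (hH : ∀ u, H u ≤ ristSubgroup u)
include hH

lemma pairwise_commute_levelFamily :
    Pairwise fun v w : List.Vector Bool n =>
      ∀ x y, x ∈ H v.toList → y ∈ H w.toList → Commute x y := by
  intro v w hvw x y hx hy
  have hne : v.toList ≠ w.toList := fun h => hvw (List.Vector.eq _ _ h)
  have hlen : v.toList.length = w.toList.length := by rw [v.toList_length, w.toList_length]
  exact commute_of_mem_ristSubgroup (hH _ hx) (hH _ hy)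
    (List.not_prefix_of_length_eq hlen hne) (List.not_prefix_of_length_eq hlen.symm hne.symm)

variable (n) in
def levelProd : (∀ v : List.Vector Bool n, H v.toList) →* ↥TreeAut :=
  noncommPiCoprod (pairwise_commute_levelFamily hH)

lemma range_levelProd : (levelProd n hH).range = levelSup H n := by
  rw [levelProd, noncommPiCoprod_range, levelSup_eq_iSup]

lemma levelSup_inf_ristSubgroup_le {u : Word} (hu : u.length = n) :
    levelSup H n ⊓ ristSubgroup u ≤ H u := by
  intro x ⟨hx, hxu⟩
  rw [← range_levelProd hH] at hx
  obtain ⟨g, rfl⟩ := hx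
  let v : List.Vector Bool n := ⟨u, hu⟩
  set r := (Finset.univ.erase v).noncommProd (fun w => (g w : ↥TreeAut))
    fun a _ b _ hab => pairwise_commute_levelFamily hH hab _ _ (g a).2 (g b).2
  have hsplit : levelProd n hH g = g v * r := (noncommPiCoprod_apply _ g).trans
    (Finset.mul_noncommProd_erase _ (Finset.mem_univ v) _ _).symm
  have hr : r ∈ subtreeFixer u := by
    refine noncommProd_mem _ _ fun w hw => ?_
    have hne : w.toList ≠ u := fun h => Finset.ne_of_mem_erase hw (List.Vector.eq _ _ h)
    have hlen : u.length = w.toList.length := by rw [hu, w.toList_length]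
    exact ristSubgroup_le_subtreeFixer (List.not_prefix_of_length_eq hlen hne.symm)
      (List.not_prefix_of_length_eq hlen.symm hne) (hH _ (g w).2)
  rw [hsplit] at hxu ⊢
  have hr' : r ∈ ristSubgroup u := by
    simpa using mul_mem (inv_mem (hH u (g v).2)) hxu
  rw [disjoint_def.mp disjoint_ristSubgroup_subtreeFixer hr' hr, mul_one]
  exact (g v).2

lemma relIndex_levelSup_ne_zero
    (hidx : ∀ u, u.length = n → (K u).relIndex (H u) ≠ 0) :
    (levelSup K n).relIndex (levelSup H n) ≠ 0 := by
  rw [← range_levelProd hH, ← index_comap]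
  let P : Subgroup (∀ v : List.Vector Bool n, H v.toList) :=
    ⨅ v, ((K v.toList).subgroupOf (H v.toList)).comap (Pi.evalMonoidHom _ v)
  have hP : P.index ≠ 0 := index_iInf_ne_zero fun v => by
    rw [index_comap_of_surjective _ fun y => ⟨Pi.mulSingle v y, by simp⟩]
    exact hidx _ v.toList_length
  have hle : P ≤ (levelSup K n).comap (levelProd n hH) := fun g hg => by
    rw [mem_comap, levelProd, noncommPiCoprod_apply]
    exact noncommProd_mem _ _ fun v _ => le_levelSup v.toList_length (mem_iInf.mp hg v)
  exact ne_zero_of_dvd_ne_zero hP (index_dvd_of_le hle)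

end LevelProduct

section RigidStabilizers

variable (G : Subgroup ↥TreeAut)

def rist (u : Word) : Subgroup ↥TreeAut := G ⊓ ristSubgroup u

def ristLevelCommutator (n : ℕ) : Subgroup ↥TreeAut :=
  levelSup (fun u => ⁅rist G u, rist G u⁆) n

lemma rist_le (u : Word) : rist G u ≤ G := inf_le_left

lemma rist_le_ristSubgroup (u : Word) : rist G u ≤ ristSubgroup u := inf_le_right

lemma commutator_rist_le_ristSubgroup (u : Word) : ⁅rist G u, rist G u⁆ ≤ ristSubgroup u :=
  (commutator_le_self _).trans (rist_le_ristSubgroup G u)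

lemma ristLevel_le (n : ℕ) : ristLevel G n ≤ G := iSup₂_le fun _ _ => inf_le_left

lemma ristLevelCommutator_le_ristLevel (n : ℕ) : ristLevelCommutator G n ≤ ristLevel G n :=
  iSup₂_le fun _ hu => (commutator_le_self _).trans (le_levelSup hu)

variable {G}

lemma map_conj_rist_le {x : ↥TreeAut} (hx : x ∈ G) (u : Word) :
    (rist G u).map (MulAut.conj x).toMonoidHom ≤ rist G (ap x u) := by
  rintro _ ⟨y, hy : y ∈ G ⊓ ristSubgroup u, rfl⟩
  exact mem_inf.mpr ⟨mul_mem (mul_mem hx hy.1) (inv_mem hx), conj_mem_ristSubgroup hy.2⟩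

lemma conj_mem_ristLevelCommutator {n : ℕ} {x y : ↥TreeAut} (hx : x ∈ G)
    (hy : y ∈ ristLevelCommutator G n) : x * y * x⁻¹ ∈ ristLevelCommutator G n := by
  suffices (ristLevelCommutator G n).map (MulAut.conj x).toMonoidHom ≤ ristLevelCommutator G n
    from this ⟨y, hy, rfl⟩
  simp only [ristLevelCommutator, levelSup, Subgroup.map_iSup, map_commutator]
  refine iSup₂_le fun u hu => le_trans ?_ (le_levelSup ((ap_length x u).trans hu))
  exact commutator_mono (map_conj_rist_le hx u) (map_conj_rist_le hx u)

lemma ristLevelCommutator_inf_rist_le {n : ℕ} {u : Word} (hu : u.length = n) :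
    ristLevelCommutator G n ⊓ rist G u ≤ ⁅rist G u, rist G u⁆ :=
  (inf_le_inf_left _ (rist_le_ristSubgroup G u)).trans
    (levelSup_inf_ristSubgroup_le (commutator_rist_le_ristSubgroup G) hu)

lemma relIndex_ristLevelCommutator_ne_zero {n : ℕ} (hfi : (ristLevel G n).relIndex G ≠ 0)
    (h : ∀ u, u.length = n → ⁅rist G u, rist G u⁆.relIndex (rist G u) ≠ 0) :
    (ristLevelCommutator G n).relIndex G ≠ 0 := by
  rw [← relIndex_mul_relIndex _ _ _ (ristLevelCommutator_le_ristLevel G n) (ristLevel_le G n)]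
  exact mul_ne_zero (relIndex_levelSup_ne_zero (rist_le_ristSubgroup G) h) hfi

lemma relIndex_commutator_rist_ne_zero {n : ℕ} {u : Word} (hu : u.length = n)
    (h : (ristLevelCommutator G n).relIndex G ≠ 0) :
    ⁅rist G u, rist G u⁆.relIndex (rist G u) ≠ 0 := fun h0 => by
  refine h (relIndex_eq_zero_of_le_right (rist_le G u) ?_)
  rw [← inf_relIndex_right]
  exact relIndex_eq_zero_of_le_left (ristLevelCommutator_inf_rist_le hu) h0

end RigidStabilizers

lemma subgroupOf_eq_bot_iff_of_le {Γ : Type*} [Group Γ] {H K : Subgroup Γ} (h : H ≤ K) :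
    H.subgroupOf K = ⊥ ↔ H = ⊥ := by
  rw [subgroupOf_eq_bot, disjoint_iff, inf_eq_left.mpr h]

lemma finiteIndex_commutator_iff {Γ : Type*} [Group Γ] (H : Subgroup Γ) :
    (commutator H).FiniteIndex ↔ ⁅H, H⁆.relIndex H ≠ 0 := by
  rw [finiteIndex_iff, relIndex, ← map_subtype_commutator, subgroupOf,
    comap_map_eq_self_of_injective H.subtype_injective]

lemma commutatorElement_mul_left_of_commute {Γ : Type*} [Group Γ] {x a b : Γ}
    (ha : Commute x a) (hb : Commute x b) : ⁅x * a, b⁆ = ⁅a, b⁆ := by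
  have hc : Commute x (a * b * a⁻¹) := (ha.mul_right hb).mul_right ha.inv_right
  calc ⁅x * a, b⁆ = x * (a * b * a⁻¹) * x⁻¹ * b⁻¹ := by rw [commutatorElement_def]; group
    _ = ⁅a, b⁆ := by rw [hc.mul_inv_cancel, commutatorElement_def]

lemma commutatorElement_mem_of_conj_mem {Γ : Type*} [Group Γ] {G M : Subgroup Γ}
    (hM : ∀ y x, y ∈ M → x ∈ G → x * y * x⁻¹ ∈ M) {c k : Γ} (hc : c ∈ M) (hk : k ∈ G) :
    ⁅c, k⁆ ∈ M := by
  have : ⁅c, k⁆ = c * (k * c⁻¹ * k⁻¹) := by rw [commutatorElement_def]; group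
  exact this ▸ mul_mem hc (hM _ _ (inv_mem hc) hk)

section LevelTransitive

variable {G : Subgroup ↥TreeAut}

lemma LevelTransitive.infinite (hlt : LevelTransitive G) : Infinite G := by
  by_contra hfin
  rw [not_infinite_iff_finite] at hfin
  set m := Nat.card G
  let orbit : G → List.Vector Bool m :=
    fun g => ⟨ap g (List.replicate m false), by simp [ap_length]⟩
  have hsurj : Function.Surjective orbit := fun v => by
    obtain ⟨g, hg, hgv⟩ := hlt (List.replicate m false) v.toList (by simp)
    exact ⟨⟨g, hg⟩, List.Vector.eq _ _ hgv⟩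
  have hcard := Nat.card_le_card_of_surjective orbit hsurj
  rw [Nat.card_eq_fintype_card, card_vector, Fintype.card_bool] at hcard
  exact Nat.lt_two_pow_self.not_ge hcard

variable (hlt : LevelTransitive G) (hfi : ∀ n, (ristLevel G n).relIndex G ≠ 0)
include hlt hfi

lemma rist_ne_bot (t : Word) : rist G t ≠ ⊥ := by
  intro ht
  have hlevel : ristLevel G t.length = ⊥ := by
    refine eq_bot_iff.mpr (iSup₂_le fun u hu => fun y hy => ?_)
    obtain ⟨g, hg, hgu⟩ := hlt u t hu
    have hconj := map_conj_rist_le hg u ⟨y, hy, rfl⟩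
    rw [hgu, ht, mem_bot] at hconj
    simpa using hconj
  have hcard := hfi t.length
  rw [hlevel, relIndex_bot_left] at hcard
  exact not_finite_iff_infinite.mpr hlt.infinite (Nat.finite_of_card_ne_zero hcard)

lemma commutator_rist_ne_bot (u : Word) : ⁅rist G u, rist G u⁆ ≠ ⊥ := by
  intro hab
  obtain ⟨x, hx, hx1⟩ := (rist G u).bot_or_exists_ne_one.resolve_left (rist_ne_bot hlt hfi u)
  obtain ⟨s, hs⟩ := exists_ap_ne_of_ne_one hx1
  have hus : u <+: s := by_contra fun h => hs ((mem_inf.mp hx).2 s h)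
  obtain ⟨z, hz, hz1⟩ := (rist G s).bot_or_exists_ne_one.resolve_left (rist_ne_bot hlt hfi s)
  have hzs : z ∈ ristSubgroup s := (mem_inf.mp hz).2
  have hzu : z ∈ rist G u := inf_le_inf_left G (ristSubgroup_anti hus) hz
  have hxz : Commute x z := commutatorElement_eq_one_iff_commute.mp
    (mem_bot.mp (hab ▸ commutator_mem_commutator hx hzu))
  have hzxs : z ∈ ristSubgroup (ap x s) := hxz.mul_inv_cancel ▸ conj_mem_ristSubgroup hzs
  have hlen : s.length = (ap x s).length := (ap_length x s).symm
  exact hz1 (disjoint_def.mp disjoint_ristSubgroup_subtreeFixer hzs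
    (ristSubgroup_le_subtreeFixer (List.not_prefix_of_length_eq hlen hs.symm)
      (List.not_prefix_of_length_eq hlen.symm hs) hzxs))

lemma ristLevelCommutator_ne_bot (n : ℕ) : ristLevelCommutator G n ≠ ⊥ :=
  ne_bot_of_le_ne_bot (commutator_rist_ne_bot hlt hfi (List.replicate n false))
    (le_levelSup (H := fun u => ⁅rist G u, rist G u⁆) List.length_replicate)

end LevelTransitive

section NormalSubgroups

variable {G M : Subgroup ↥TreeAut} (hM : ∀ y x, y ∈ M → x ∈ G → x * y * x⁻¹ ∈ M)
include hM

lemma commutator_rist_le_of_ap_ne {a : ↥TreeAut} {u : Word} (ha : a ∈ M) (hu : ap a u ≠ u) :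
    ⁅rist G u, rist G u⁆ ≤ M := by
  have hlen : u.length = (ap a u).length := (ap_length a u).symm
  have hinv : ∀ h ∈ rist G u, ∀ k ∈ rist G u, ⁅h⁻¹, k⁆ ∈ M := by
    intro h hh k hk
    have hh' := (mem_inf.mp hh).2
    have hcomm : ∀ y ∈ ristSubgroup u, Commute (a * h * a⁻¹) y := fun y hy =>
      commute_of_mem_ristSubgroup (conj_mem_ristSubgroup hh') hy
        (List.not_prefix_of_length_eq hlen.symm hu) (List.not_prefix_of_length_eq hlen hu.symm)
    have hkey : ⁅⁅a, h⁆, k⁆ = ⁅h⁻¹, k⁆ := by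
      rw [commutatorElement_def a h, commutatorElement_mul_left_of_commute
        (hcomm _ (inv_mem hh')) (hcomm _ (mem_inf.mp hk).2)]
    exact hkey ▸ commutatorElement_mem_of_conj_mem hM
      (commutatorElement_mem_of_conj_mem hM ha (mem_inf.mp hh).1) (mem_inf.mp hk).1
  exact commutator_le.mpr fun h hh k hk => by simpa using hinv h⁻¹ (inv_mem hh) k hk

lemma ristLevelCommutator_le_of_ap_ne (hlt : LevelTransitive G) {a : ↥TreeAut} {t : Word}
    (ha : a ∈ M) (ht : ap a t ≠ t) : ristLevelCommutator G t.length ≤ M := by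
  refine iSup₂_le fun u hu => ?_
  obtain ⟨g, hg, rfl⟩ := hlt t u (Eq.symm hu)
  refine commutator_rist_le_of_ap_ne hM (hM a g ha hg) ?_
  simpa [ap_mul] using (ap_injective g).ne ht

end NormalSubgroups

/-- a branch group `G ≤ Aut(X*)` is just-infinite iff for every word
`u` the rigid stabilizer `Rist_G(u)` has finite abelianization, i.e. its commutator
subgroup has finite index. -/
theorem statement15 (G : Subgroup ↥TreeAut) (hlt : LevelTransitive G)
    (hfi : ∀ n : ℕ, (ristLevel G n).relIndex G ≠ 0) :
    (∀ N : Subgroup ↥G, N.Normal → N ≠ ⊥ → N.FiniteIndex) ↔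
      ∀ u : Word, (commutator ↥(G ⊓ ristSubgroup u : Subgroup ↥TreeAut)).FiniteIndex := by
  simp_rw [finiteIndex_commutator_iff]
  constructor
  · intro hji u
    have hDG : ristLevelCommutator G u.length ≤ G :=
      (ristLevelCommutator_le_ristLevel G _).trans (ristLevel_le G _)
    refine relIndex_commutator_rist_ne_zero rfl (finiteIndex_iff.mp (hji _ ?_ ?_))
    · exact (normal_subgroupOf_iff hDG).mpr fun y x hy hx => conj_mem_ristLevelCommutator hx hy
    · exact (subgroupOf_eq_bot_iff_of_le hDG).not.mpr (ristLevelCommutator_ne_bot hlt hfi _)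
  · intro hab N hN hne
    obtain ⟨M, hMG, rfl⟩ : ∃ M ≤ G, M.subgroupOf G = N :=
      ⟨N.map G.subtype, map_subtype_le N, comap_map_eq_self_of_injective G.subtype_injective N⟩
    obtain ⟨a, haM, ha⟩ :=
      M.bot_or_exists_ne_one.resolve_left ((subgroupOf_eq_bot_iff_of_le hMG).not.mp hne)
    obtain ⟨t, ht⟩ := exists_ap_ne_of_ne_one ha
    have hle := ristLevelCommutator_le_of_ap_ne ((normal_subgroupOf_iff hMG).mp hN) hlt haM ht
    have hD := relIndex_ristLevelCommutator_ne_zero (hfi t.length) fun u _ => hab u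
    exact finiteIndex_iff.mpr fun h0 => hD (relIndex_eq_zero_of_le_left hle h0)
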